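/- arXiv:math/0410119 — 5 statements merged into one kernel-verified Lean document; each statement's English description precedes it below -/
import Mathlib

section
/- Let d ≥ 1. For every element b of the braid group B_d there exists a natural number k and a positive braid β ∈ B_d⁺ such that Δ^{2k} · b = i(β), where Δ² denotes the full twist (σ_1 σ_2 ⋯ σ_{d−1})^d. -/
/-- The braid relations, as elements of the free group on `d - 1` generators
(indexed by `Fin (d - 1)`, so `i : Fin (d-1)` stands for the generator `σ_{i+1}`):
`σ_i σ_j σ_i (σ_j σ_i σ_j)⁻¹` whenever `j = i + 1`, and `σ_i σ_j (σ_j σ_i)⁻¹`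
whenever `|i - j| ≥ 2` (by symmetry it suffices to impose `j ≥ i + 2`). -/
def braidRels (d : ℕ) : Set (FreeGroup (Fin (d - 1))) :=
  {r | (∃ i j : Fin (d - 1), (i : ℕ) + 1 = (j : ℕ) ∧
          r = .of i * .of j * .of i * (.of j * .of i * .of j)⁻¹) ∨
       (∃ i j : Fin (d - 1), (i : ℕ) + 2 ≤ (j : ℕ) ∧
          r = .of i * .of j * (.of j * .of i)⁻¹)}

/-- The Artin braid group `B_d` on `d` strings, presented by generators
`σ_1, …, σ_{d-1}` and the braid relations. -/
abbrev BraidGroup (d : ℕ) := PresentedGroup (braidRels d)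

/-- The standard generators of the braid group; `σ i` for `i : Fin (d - 1)` is the
generator usually written `σ_{i+1}` (so `σ ⟨0, _⟩` is `σ_1`, etc.). -/
def σ {d : ℕ} (i : Fin (d - 1)) : BraidGroup d := PresentedGroup.of i

/-- The full twist `Δ² = (σ_1 σ_2 ⋯ σ_{d-1})^d` in the braid group `B_d`. -/
def fullTwist (d : ℕ) : BraidGroup d := (((List.finRange (d - 1)).map σ).prod) ^ d

theorem braidRels_eq_one {d : ℕ} {r : FreeGroup (Fin (d - 1))} (hr : r ∈ braidRels d) :
    PresentedGroup.mk (braidRels d) r = 1 :=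
  (QuotientGroup.eq_one_iff r).mpr (Subgroup.subset_normalClosure hr)

/-- The braid relation `σ_i σ_{i+1} σ_i = σ_{i+1} σ_i σ_{i+1}` holds in `B_d`. -/
theorem braid_rel₁ {d : ℕ} {i j : Fin (d - 1)} (h : (i : ℕ) + 1 = (j : ℕ)) :
    σ i * σ j * σ i = σ j * σ i * σ j := by
  have := braidRels_eq_one (d := d) (Or.inl ⟨i, j, h, rfl⟩)
  simp only [map_mul, map_inv, mul_inv_eq_one] at this
  simpa [σ, PresentedGroup.of] using this

/-- The braid relation `σ_i σ_j = σ_j σ_i` for `|i - j| ≥ 2` holds in `B_d`. -/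
theorem braid_rel₂ {d : ℕ} {i j : Fin (d - 1)} (h : (i : ℕ) + 2 ≤ (j : ℕ)) :
    σ i * σ j = σ j * σ i := by
  have := braidRels_eq_one (d := d) (Or.inr ⟨i, j, h, rfl⟩)
  simp only [map_mul, map_inv, mul_inv_eq_one] at this
  simpa [σ, PresentedGroup.of] using this

/-- The braid relations, as a binary relation on the free monoid on the same generators:
`σ_i σ_j σ_i ∼ σ_j σ_i σ_j` whenever `j = i + 1`, and `σ_i σ_j ∼ σ_j σ_i` whenever
`|i - j| ≥ 2`. -/
def braidRelsM (d : ℕ) : FreeMonoid (Fin (d - 1)) → FreeMonoid (Fin (d - 1)) → Prop :=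
  fun a b =>
    (∃ i j : Fin (d - 1), (i : ℕ) + 1 = (j : ℕ) ∧
        a = .of i * .of j * .of i ∧ b = .of j * .of i * .of j) ∨
    (∃ i j : Fin (d - 1), (i : ℕ) + 2 ≤ (j : ℕ) ∧
        a = .of i * .of j ∧ b = .of j * .of i)

/-- The positive braid monoid `B_d⁺`, presented by the generators `σ_1, …, σ_{d-1}` and the
braid relations (with no inverses allowed). -/
abbrev PosBraidMonoid (d : ℕ) := PresentedMonoid (braidRelsM d)

/-- The canonical monoid homomorphism `i : B_d⁺ → B_d`, induced by sending each generator of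
the positive braid monoid to the corresponding generator of the braid group. -/
def posToBraid (d : ℕ) : PosBraidMonoid d →* BraidGroup d :=
  PresentedMonoid.lift (fun i => σ i) (by
    rintro a b (⟨i, j, hij, rfl, rfl⟩ | ⟨i, j, hij, rfl, rfl⟩) <;>
      simp only [map_mul, FreeMonoid.lift_eval_of]
    · exact braid_rel₁ hij
    · exact braid_rel₂ hij)

namespace GarsideAux

/-- ℕ-indexed generators, extended by `1` out of range. -/
def s (d k : ℕ) : BraidGroup d := if h : k < d - 1 then σ ⟨k, h⟩ else 1

lemma s_eq {d k : ℕ} (h : k < d - 1) : s d k = σ ⟨k, h⟩ := dif_pos h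

lemma braid1 {d k : ℕ} (h : k + 1 < d - 1) (x : BraidGroup d) :
    s d k * (s d (k + 1) * (s d k * x)) = s d (k + 1) * (s d k * (s d (k + 1) * x)) := by
  have hk : k < d - 1 := by omega
  rw [s_eq hk, s_eq h]
  have hb := braid_rel₁ (d := d) (i := ⟨k, hk⟩) (j := ⟨k + 1, h⟩) rfl
  simp only [← mul_assoc]
  rw [hb]

lemma braid2 {d j k : ℕ} (h : j + 2 ≤ k) (x : BraidGroup d) :
    s d j * (s d k * x) = s d k * (s d j * x) := by
  by_cases hk : k < d - 1
  · have hj : j < d - 1 := by omega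
    rw [s_eq hj, s_eq hk]
    have hb := braid_rel₂ (d := d) (i := ⟨j, hj⟩) (j := ⟨k, hk⟩) h
    simp only [← mul_assoc]
    rw [hb]
  · rw [show s d k = 1 from dif_neg hk]
    simp

/-- `D d m = σ_0 σ_1 ⋯ σ_{m-1}`. -/
def D (d m : ℕ) : BraidGroup d := ((List.range m).map (s d)).prod

lemma D_zero {d : ℕ} : D d 0 = 1 := rfl

lemma D_succ {d m : ℕ} : D d (m + 1) = D d m * s d m := by
  simp [D, List.range_succ]

lemma D_comm {d m k : ℕ} (h : m + 1 ≤ k) (x : BraidGroup d) :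
    s d k * (D d m * x) = D d m * (s d k * x) := by
  induction m generalizing x with
  | zero => simp [D_zero]
  | succ m ih =>
    have h' : m + 1 ≤ k := by omega
    calc s d k * (D d (m + 1) * x)
        = s d k * (D d m * (s d m * x)) := by rw [D_succ, mul_assoc]
      _ = D d m * (s d k * (s d m * x)) := ih h' _
      _ = D d m * (s d m * (s d k * x)) := by rw [braid2 (by omega : m + 2 ≤ k)]
      _ = D d (m + 1) * (s d k * x) := by rw [D_succ, mul_assoc]

lemma D_shift {d j : ℕ} : ∀ m, j + 2 ≤ m → m ≤ d - 1 → ∀ x : BraidGroup d,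
    D d m * (s d j * x) = s d (j + 1) * (D d m * x) := by
  intro m
  induction m with
  | zero => intro h; omega
  | succ m ih =>
    intro h2 hm x
    rcases Nat.lt_or_ge (j + 2) (m + 1) with hlt | hge
    · have h2' : j + 2 ≤ m := by omega
      calc D d (m + 1) * (s d j * x)
          = D d m * (s d m * (s d j * x)) := by simp only [D_succ, mul_assoc]
        _ = D d m * (s d j * (s d m * x)) := by rw [braid2 h2']
        _ = s d (j + 1) * (D d m * (s d m * x)) := ih h2' (by omega) _
        _ = s d (j + 1) * (D d (m + 1) * x) := by simp only [D_succ, mul_assoc]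
    · have hmj : m = j + 1 := by omega
      subst hmj
      have hb : j + 1 < d - 1 := by omega
      calc D d (j + 1 + 1) * (s d j * x)
          = D d j * (s d j * (s d (j + 1) * (s d j * x))) := by
            simp only [D_succ, mul_assoc]
        _ = D d j * (s d (j + 1) * (s d j * (s d (j + 1) * x))) := by rw [braid1 hb]
        _ = s d (j + 1) * (D d j * (s d j * (s d (j + 1) * x))) := by
            rw [D_comm (le_refl (j + 1))]
        _ = s d (j + 1) * (D d (j + 1 + 1) * x) := by
            simp only [D_succ, mul_assoc]

lemma pow_shift {d j k i : ℕ} (h : j + k ≤ d - 2) (hi : i = j + k) (x : BraidGroup d) :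
    D d (d - 1) ^ k * (s d j * x) = s d i * (D d (d - 1) ^ k * x) := by
  subst hi
  induction k generalizing x with
  | zero => simp
  | succ k ih =>
    have hcond : j + k + 2 ≤ d - 1 := by omega
    calc D d (d - 1) ^ (k + 1) * (s d j * x)
        = D d (d - 1) * (D d (d - 1) ^ k * (s d j * x)) := by
          rw [pow_succ']; rw [mul_assoc]
      _ = D d (d - 1) * (s d (j + k) * (D d (d - 1) ^ k * x)) := by
          rw [ih (by omega)]
      _ = s d (j + k + 1) * (D d (d - 1) * (D d (d - 1) ^ k * x)) := by
          rw [D_shift (d - 1) hcond (le_refl _)]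
      _ = s d (j + (k + 1)) * (D d (d - 1) ^ (k + 1) * x) := by
          rw [pow_succ', mul_assoc, Nat.add_assoc]

lemma twist_shift {d : ℕ} (m : ℕ) (hm : m + 1 ≤ d - 1) (x : BraidGroup d) :
    D d (m + 1) * (D d (m + 1) * (s d m * x)) =
      s d 0 * (D d (m + 1) * (D d (m + 1) * x)) := by
  induction m generalizing x with
  | zero =>
    simp only [D_succ, D_zero, one_mul]
  | succ m ih =>
    have hm' : m + 1 ≤ d - 1 := by omega
    have hb : m + 1 < d - 1 := by omega
    calc D d (m + 1 + 1) * (D d (m + 1 + 1) * (s d (m + 1) * x))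
        = D d (m + 1) * (D d m * (s d (m + 1) * (s d m * (s d (m + 1) * (s d (m + 1) * x))))) := by
          simp only [D_succ, mul_assoc]; rw [D_comm (le_refl (m + 1))]
      _ = D d (m + 1) * (D d m * (s d m * (s d (m + 1) * (s d m * (s d (m + 1) * x))))) := by
          rw [← braid1 hb]
      _ = D d (m + 1) * (D d (m + 1) * (s d (m + 1) * (s d m * (s d (m + 1) * x)))) := by
          simp only [D_succ, mul_assoc]
      _ = D d (m + 1) * (D d (m + 1) * (s d m * (s d (m + 1) * (s d m * x)))) := by
          rw [← braid1 hb]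
      _ = s d 0 * (D d (m + 1) * (D d (m + 1) * (s d (m + 1) * (s d m * x)))) := by
          rw [ih hm']
      _ = s d 0 * (D d (m + 1) * (D d m * (s d m * (s d (m + 1) * (s d m * x))))) := by
          simp only [D_succ, mul_assoc]
      _ = s d 0 * (D d (m + 1) * (D d m * (s d (m + 1) * (s d m * (s d (m + 1) * x))))) := by
          rw [braid1 hb]
      _ = s d 0 * (D d (m + 1) * (s d (m + 1) * (D d m * (s d m * (s d (m + 1) * x))))) := by
          rw [← D_comm (le_refl (m + 1))]
      _ = s d 0 * (D d (m + 1 + 1) * (D d (m + 1 + 1) * x)) := by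
          simp only [D_succ, mul_assoc]

lemma s_eq_sigma {d : ℕ} (j : Fin (d - 1)) : s d (j : ℕ) = σ j := by
  rw [s_eq j.isLt]

lemma twist_shift' {d : ℕ} (hd : 2 ≤ d) (x : BraidGroup d) :
    D d (d - 1) * (D d (d - 1) * (s d (d - 2) * x)) =
      s d 0 * (D d (d - 1) * (D d (d - 1) * x)) := by
  have h := twist_shift (d := d) (d - 2) (by omega) x
  rwa [show d - 2 + 1 = d - 1 from by omega] at h

lemma delta_comm_sigma {d : ℕ} (j : Fin (d - 1)) :
    D d (d - 1) ^ d * σ j = σ j * D d (d - 1) ^ d := by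
  have hj : (j : ℕ) < d - 1 := j.isLt
  have hd2 : 2 ≤ d := by omega
  rw [← s_eq_sigma]
  calc D d (d - 1) ^ d * s d (j : ℕ)
      = D d (d - 1) ^ ((j : ℕ) + 2 + (d - 2 - (j : ℕ))) * (s d (j : ℕ) * 1) := by
        rw [mul_one, show (j : ℕ) + 2 + (d - 2 - (j : ℕ)) = d from by omega]
    _ = D d (d - 1) ^ ((j : ℕ) + 2) * (D d (d - 1) ^ (d - 2 - (j : ℕ)) * (s d (j : ℕ) * 1)) := by
        rw [pow_add, mul_assoc]
    _ = D d (d - 1) ^ ((j : ℕ) + 2) * (s d (d - 2) * (D d (d - 1) ^ (d - 2 - (j : ℕ)) * 1)) := by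
        rw [pow_shift (i := d - 2) (by omega) (by omega)]
    _ = D d (d - 1) ^ (j : ℕ) *
          (D d (d - 1) * (D d (d - 1) * (s d (d - 2) * (D d (d - 1) ^ (d - 2 - (j : ℕ)) * 1)))) := by
        rw [pow_add, sq]; simp only [mul_assoc]
    _ = D d (d - 1) ^ (j : ℕ) *
          (s d 0 * (D d (d - 1) * (D d (d - 1) * (D d (d - 1) ^ (d - 2 - (j : ℕ)) * 1)))) := by
        rw [twist_shift' hd2]
    _ = s d (j : ℕ) * (D d (d - 1) ^ (j : ℕ) *
          (D d (d - 1) * (D d (d - 1) * (D d (d - 1) ^ (d - 2 - (j : ℕ)) * 1)))) := by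
        rw [pow_shift (i := (j : ℕ)) (by omega) (by omega)]
    _ = s d (j : ℕ) * D d (d - 1) ^ d := by
        rw [mul_one, ← pow_succ', ← pow_succ', ← pow_add,
          show (j : ℕ) + (d - 2 - (j : ℕ) + 1 + 1) = d from by omega]

lemma delta_central {d : ℕ} (x : BraidGroup d) :
    D d (d - 1) ^ d * x = x * D d (d - 1) ^ d := by
  have hσ : (σ (d := d)) = PresentedGroup.of := rfl
  have hx : x ∈ Subgroup.closure (Set.range (σ (d := d))) := by
    rw [hσ, PresentedGroup.closure_range_of]; trivial
  refine Subgroup.closure_induction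
    (p := fun g _ => D d (d - 1) ^ d * g = g * D d (d - 1) ^ d) ?_ ?_ ?_ ?_ hx
  · rintro g ⟨j, rfl⟩; exact delta_comm_sigma j
  · simp
  · intro a b _ _ ha hb
    rw [← mul_assoc, ha, mul_assoc, hb, ← mul_assoc]
  · intro a _ ha
    have h2 : a⁻¹ * (D d (d - 1) ^ d * a) * a⁻¹ = a⁻¹ * (a * D d (d - 1) ^ d) * a⁻¹ := by
      rw [ha]
    simpa [mul_assoc] using h2.symm

/-- The submonoid of positive braids. -/
def Pos (d : ℕ) : Submonoid (BraidGroup d) := MonoidHom.mrange (posToBraid d)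

lemma mem_Pos {d : ℕ} {g : BraidGroup d} : g ∈ Pos d ↔ ∃ β, posToBraid d β = g :=
  MonoidHom.mem_mrange

lemma sigma_mem_Pos {d : ℕ} (j : Fin (d - 1)) : σ j ∈ Pos d :=
  mem_Pos.mpr ⟨PresentedMonoid.of _ j, rfl⟩

lemma s_mem_Pos {d : ℕ} (k : ℕ) : s d k ∈ Pos d := by
  unfold s
  split
  · exact sigma_mem_Pos _
  · exact one_mem _

lemma D_mem_Pos {d m : ℕ} : D d m ∈ Pos d := by
  refine Submonoid.list_prod_mem _ ?_
  intro x hx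
  simp only [List.mem_map] at hx
  obtain ⟨k, -, rfl⟩ := hx
  exact s_mem_Pos k

lemma D_cons {d m : ℕ} :
    D d (m + 1) = s d 0 * ((List.range m).map (fun k => s d (k + 1))).prod := by
  rw [D, List.range_succ_eq_map]
  simp [List.map_map, Function.comp_def]

lemma delta_eq {d : ℕ} (hd : 2 ≤ d) :
    D d (d - 1) = s d 0 * ((List.range (d - 2)).map (fun k => s d (k + 1))).prod := by
  have h0 : D d (d - 1) = D d (d - 2 + 1) := congrArg (D d) (by omega)
  rw [h0, D_cons]

lemma key_pos {d : ℕ} (j : Fin (d - 1)) :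
    D d (d - 1) ^ d * (σ j)⁻¹ ∈ Pos d := by
  have hj : (j : ℕ) < d - 1 := j.isLt
  have hd2 : 2 ≤ d := by omega
  set E : BraidGroup d := ((List.range (d - 2)).map (fun k => s d (k + 1))).prod with hE
  have hEmem : E ∈ Pos d := by
    refine Submonoid.list_prod_mem _ ?_
    intro x hx
    simp only [List.mem_map] at hx
    obtain ⟨k, -, rfl⟩ := hx
    exact s_mem_Pos _
  have hsh : D d (d - 1) ^ (j : ℕ) * s d 0 = s d (j : ℕ) * D d (d - 1) ^ (j : ℕ) := by
    simpa using pow_shift (d := d) (j := 0) (k := (j : ℕ)) (i := (j : ℕ))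
      (by omega) (by omega) 1
  have hinv : D d (d - 1) ^ (j : ℕ) * (s d 0)⁻¹ = (s d (j : ℕ))⁻¹ * D d (d - 1) ^ (j : ℕ) := by
    rw [mul_inv_eq_iff_eq_mul, mul_assoc, hsh, inv_mul_cancel_left]
  have heq : D d (d - 1) ^ d * (σ j)⁻¹ =
      D d (d - 1) ^ (j : ℕ) * (E * D d (d - 1) ^ (d - (j : ℕ) - 1)) := by
    have : D d (d - 1) ^ (j : ℕ) * (E * D d (d - 1) ^ (d - (j : ℕ) - 1)) =
        (σ j)⁻¹ * D d (d - 1) ^ d := by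
      calc D d (d - 1) ^ (j : ℕ) * (E * D d (d - 1) ^ (d - (j : ℕ) - 1))
          = D d (d - 1) ^ (j : ℕ) * ((s d 0)⁻¹ * (D d (d - 1) * D d (d - 1) ^ (d - (j : ℕ) - 1))) := by
            rw [delta_eq hd2, ← hE]; simp only [mul_assoc, inv_mul_cancel_left]
        _ = D d (d - 1) ^ (j : ℕ) * ((s d 0)⁻¹ * D d (d - 1) ^ (d - (j : ℕ))) := by
            rw [← pow_succ', show d - (j : ℕ) - 1 + 1 = d - (j : ℕ) from by omega]
        _ = (D d (d - 1) ^ (j : ℕ) * (s d 0)⁻¹) * D d (d - 1) ^ (d - (j : ℕ)) := by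
            rw [mul_assoc]
        _ = ((s d (j : ℕ))⁻¹ * D d (d - 1) ^ (j : ℕ)) * D d (d - 1) ^ (d - (j : ℕ)) := by
            rw [hinv]
        _ = (σ j)⁻¹ * D d (d - 1) ^ d := by
            rw [s_eq_sigma, mul_assoc, ← pow_add,
              show (j : ℕ) + (d - (j : ℕ)) = d from by omega]
    rw [this, ← delta_central]
  rw [heq]
  exact mul_mem (pow_mem D_mem_Pos _) (mul_mem hEmem (pow_mem D_mem_Pos _))

lemma fullTwist_eq {d : ℕ} : fullTwist d = D d (d - 1) ^ d := by
  unfold fullTwist D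
  congr 2
  apply List.ext_getElem
  · simp
  · intro i h1 h2
    simp only [List.getElem_map, List.getElem_finRange, List.getElem_range]
    rw [s_eq (by simpa using h2)]
    congr 1

end GarsideAux

/-- **Garside's second observation.** For `d ≥ 1`, every element `b` of the braid group `B_d`
becomes positive after multiplication by a suitable even power of the Garside element:
there exist `k : ℕ` and a positive braid `β ∈ B_d⁺` with `Δ^{2k} · b = i(β)`, where
`Δ² = (σ_1 σ_2 ⋯ σ_{d-1})^d` is the full twist. -/
theorem garside_positive_power (d : ℕ) (hd : 1 ≤ d) (b : BraidGroup d) :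
    ∃ (k : ℕ) (β : PosBraidMonoid d), (fullTwist d) ^ k * b = posToBraid d β := by
  have hcomm : ∀ (k : ℕ) (x : BraidGroup d), fullTwist d ^ k * x = x * fullTwist d ^ k := by
    intro k x
    have h1 : Commute (fullTwist d) x := by
      show fullTwist d * x = x * fullTwist d
      rw [GarsideAux.fullTwist_eq]
      exact GarsideAux.delta_central x
    exact (h1.pow_left k).eq
  have hσ : (σ (d := d)) = PresentedGroup.of := rfl
  have hb : b ∈ Subgroup.closure (Set.range (σ (d := d))) := by
    rw [hσ, PresentedGroup.closure_range_of]; trivial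
  have main : ∀ x : BraidGroup d, x ∈ Subgroup.closure (Set.range (σ (d := d))) →
      (∃ k β, fullTwist d ^ k * x = posToBraid d β) ∧
      (∃ k β, fullTwist d ^ k * x⁻¹ = posToBraid d β) := by
    intro x hx
    refine Subgroup.closure_induction (p := fun g _ =>
      (∃ k β, fullTwist d ^ k * g = posToBraid d β) ∧
      (∃ k β, fullTwist d ^ k * g⁻¹ = posToBraid d β)) ?_ ?_ ?_ ?_ hx
    · rintro g ⟨j, rfl⟩
      constructor
      · exact ⟨0, PresentedMonoid.of _ j, by rw [pow_zero, one_mul]; rfl⟩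
      · obtain ⟨β, hβ⟩ := GarsideAux.mem_Pos.mp (GarsideAux.key_pos j)
        exact ⟨1, β, by rw [pow_one, GarsideAux.fullTwist_eq, hβ]⟩
    · exact ⟨⟨0, 1, by simp⟩, ⟨0, 1, by simp⟩⟩
    · rintro a b _ _ ⟨⟨k1, β1, h1⟩, k1', γ1, h1'⟩ ⟨⟨k2, β2, h2⟩, k2', γ2, h2'⟩
      constructor
      · refine ⟨k1 + k2, β1 * β2, ?_⟩
        rw [pow_add, map_mul, ← h1, ← h2]
        calc fullTwist d ^ k1 * fullTwist d ^ k2 * (a * b)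
            = fullTwist d ^ k1 * (fullTwist d ^ k2 * a) * b := by simp [mul_assoc]
          _ = fullTwist d ^ k1 * (a * fullTwist d ^ k2) * b := by rw [hcomm k2 a]
          _ = fullTwist d ^ k1 * a * (fullTwist d ^ k2 * b) := by simp [mul_assoc]
      · refine ⟨k2' + k1', γ2 * γ1, ?_⟩
        rw [pow_add, map_mul, ← h2', ← h1', mul_inv_rev]
        calc fullTwist d ^ k2' * fullTwist d ^ k1' * (b⁻¹ * a⁻¹)
            = fullTwist d ^ k2' * (fullTwist d ^ k1' * b⁻¹) * a⁻¹ := by simp [mul_assoc]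
          _ = fullTwist d ^ k2' * (b⁻¹ * fullTwist d ^ k1') * a⁻¹ := by rw [hcomm k1' b⁻¹]
          _ = fullTwist d ^ k2' * b⁻¹ * (fullTwist d ^ k1' * a⁻¹) := by simp [mul_assoc]
    · rintro a _ ⟨h1, h2⟩
      exact ⟨h2, by simpa using h1⟩
  exact (main b hb).1
end

section
/- Let G be a group, let (ρ_1, …, ρ_r) be a tuple of elements of G, let 1 ≤ p ≤ q ≤ r, and let H be the subgroup of G generated by ρ_p, …, ρ_q. Suppose that the product ρ_p ρ_{p+1} ⋯ ρ_q lies in the center of H, and let b ∈ H. Then the tuple (ρ_1, …, ρ_{p−1}, b^{−1} ρ_p b, b^{−1} ρ_{p+1} b, …, b^{−1} ρ_q b, ρ_{q+1}, …, ρ_r) is Hurwitz equivalent to (ρ_1, …, ρ_r). -/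
/-! Simultaneous conjugation commutes with Hurwitz moves, so the elements `g` for which the
conjugate of a tuple `l` by `g` is Hurwitz equivalent to `l` form a subgroup, which depends only on
the Hurwitz class of `l`. It therefore suffices to show that this subgroup contains every entry
`g` of the block. When the product of the block commutes with all its entries, the block can be
rotated cyclically so that `g` comes first, and pushing `g` through the rest of the block and
rotating it back to the front conjugates the whole block by `g`. -/

/-- An elementary Hurwitz move on tuples (lists) of elements of a group `G`: two consecutive
entries `(a, b)` are replaced by `(a b a⁻¹, a)`. -/
inductive HurwitzMove {G : Type*} [Group G] : List G → List G → Prop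
  | move (l₁ l₂ : List G) (a b : G) :
      HurwitzMove (l₁ ++ a :: b :: l₂) (l₁ ++ (a * b * a⁻¹) :: a :: l₂)

/-- Hurwitz equivalence of tuples (lists) of elements of a group `G`: the equivalence
relation generated by elementary Hurwitz moves (the inverse move, replacing `(a, b)` by
`(b, b⁻¹ a b)`, is included since we take the equivalence closure). -/
def HurwitzEquiv {G : Type*} [Group G] : List G → List G → Prop :=
  Relation.EqvGen HurwitzMove

theorem Relation.EqvGen.map {α β : Type*} {r : α → α → Prop} {s : β → β → Prop}
    (f : α → β) (hf : ∀ x y, r x y → s (f x) (f y)) {x y : α} (h : EqvGen r x y) :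
    EqvGen s (f x) (f y) := by
  induction h with
  | rel x y hxy => exact .rel _ _ (hf x y hxy)
  | refl x => exact .refl _
  | symm x y _ ih => exact .symm _ _ ih
  | trans x y z _ _ ihxy ihyz => exact .trans _ _ _ ihxy ihyz

section

variable {G G' : Type*} [Group G] [Group G']

theorem commute_self_mul_iff {a b : G} : Commute a (a * b) ↔ Commute a b :=
  ⟨fun h => by simpa using (Commute.refl a).inv_right.mul_right h, (Commute.refl a).mul_right⟩

namespace HurwitzMove

theorem append (l₁ l₂ : List G) {x y : List G} (h : HurwitzMove x y) :
    HurwitzMove (l₁ ++ x ++ l₂) (l₁ ++ y ++ l₂) := by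
  obtain ⟨u, v, a, b⟩ := h
  simpa using HurwitzMove.move (l₁ ++ u) (v ++ l₂) a b

theorem map {F : Type*} [FunLike F G G'] [MonoidHomClass F G G'] (f : F) {x y : List G}
    (h : HurwitzMove x y) : HurwitzMove (x.map f) (y.map f) := by
  obtain ⟨u, v, a, b⟩ := h
  simpa using HurwitzMove.move (u.map f) (v.map f) (f a) (f b)

theorem prod_eq {x y : List G} (h : HurwitzMove x y) : x.prod = y.prod := by
  obtain ⟨u, v, a, b⟩ := h
  simp [List.prod_append, mul_assoc]

end HurwitzMove

namespace HurwitzEquiv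

theorem refl (l : List G) : HurwitzEquiv l l := Relation.EqvGen.refl l

theorem symm {x y : List G} (h : HurwitzEquiv x y) : HurwitzEquiv y x :=
  Relation.EqvGen.symm _ _ h

theorem trans {x y z : List G} (hxy : HurwitzEquiv x y) (hyz : HurwitzEquiv y z) :
    HurwitzEquiv x z :=
  Relation.EqvGen.trans _ _ _ hxy hyz

instance : @Trans (List G) (List G) (List G) HurwitzEquiv HurwitzEquiv HurwitzEquiv :=
  ⟨trans⟩

theorem append (l₁ l₂ : List G) {x y : List G} (h : HurwitzEquiv x y) :
    HurwitzEquiv (l₁ ++ x ++ l₂) (l₁ ++ y ++ l₂) :=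
  Relation.EqvGen.map (r := HurwitzMove) _ (fun _ _ => HurwitzMove.append l₁ l₂) h

theorem cons (c : G) {x y : List G} (h : HurwitzEquiv x y) : HurwitzEquiv (c :: x) (c :: y) := by
  simpa using append [c] [] h

theorem map {F : Type*} [FunLike F G G'] [MonoidHomClass F G G'] (f : F) {x y : List G}
    (h : HurwitzEquiv x y) : HurwitzEquiv (x.map f) (y.map f) :=
  Relation.EqvGen.map (r := HurwitzMove) _ (fun _ _ => HurwitzMove.map f) h

theorem prod_eq {x y : List G} (h : HurwitzEquiv x y) : x.prod = y.prod :=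
  eq_equivalence.eqvGen_iff.mp <|
    Relation.EqvGen.map (r := HurwitzMove) _ (fun _ _ => HurwitzMove.prod_eq) h

theorem cons_cons (a b : G) (l : List G) :
    HurwitzEquiv (a :: b :: l) (a * b * a⁻¹ :: a :: l) :=
  Relation.EqvGen.rel _ _ (by simpa using HurwitzMove.move [] l a b)

theorem cons_cons_conj (a b : G) (l : List G) :
    HurwitzEquiv (a :: b :: l) (b :: b⁻¹ * a * b :: l) := by
  simpa [mul_assoc] using (cons_cons b (b⁻¹ * a * b) l).symm

theorem cons_append_conj (a : G) (t : List G) :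
    HurwitzEquiv (a :: t) (t ++ [t.prod⁻¹ * a * t.prod]) := by
  induction t generalizing a with
  | nil => simpa using refl [a]
  | cons b t ih =>
    calc HurwitzEquiv (a :: b :: t) (b :: b⁻¹ * a * b :: t) := cons_cons_conj a b t
      HurwitzEquiv _ _ := by simpa [mul_assoc] using (ih (b⁻¹ * a * b)).cons b

theorem cons_append_of_commute {a : G} {t : List G} (h : Commute a t.prod) :
    HurwitzEquiv (a :: t) (t ++ [a]) := by
  have := cons_append_conj a t
  rwa [mul_assoc, h.eq, inv_mul_cancel_left] at this

theorem append_comm {u v : List G} (h : ∀ x ∈ u, Commute x (u ++ v).prod) :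
    HurwitzEquiv (u ++ v) (v ++ u) := by
  induction u generalizing v with
  | nil => simpa using refl v
  | cons a u ih =>
    have ha : Commute a (u ++ v).prod := commute_self_mul_iff.mp (h a List.mem_cons_self)
    have hrot : HurwitzEquiv (a :: (u ++ v)) (u ++ (v ++ [a])) := by
      simpa using cons_append_of_commute ha
    calc HurwitzEquiv (a :: u ++ v) (u ++ (v ++ [a])) := hrot
      HurwitzEquiv _ _ := by
        simpa using ih (v := v ++ [a]) fun x hx => by
          rw [← hrot.prod_eq]
          exact h x (List.mem_cons_of_mem a hx)

theorem cons_map_conj_append (a : G) (t : List G) :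
    HurwitzEquiv (a :: t) (t.map (MulAut.conj a) ++ [a]) := by
  induction t with
  | nil => simpa using refl [a]
  | cons b t ih =>
    calc HurwitzEquiv (a :: b :: t) (a * b * a⁻¹ :: a :: t) := cons_cons a b t
      HurwitzEquiv _ _ := by simpa using ih.cons (a * b * a⁻¹)

theorem map_conj_head {a : G} {t : List G} (h : Commute a t.prod) :
    HurwitzEquiv (a :: t) ((a :: t).map (MulAut.conj a)) := by
  have h' : Commute a (t.map (MulAut.conj a)).prod := by
    have := h.map (MulAut.conj a)
    rwa [map_list_prod, MulAut.conj_apply, mul_inv_cancel_right] at this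
  calc HurwitzEquiv (a :: t) (t.map (MulAut.conj a) ++ [a]) := cons_map_conj_append a t
    HurwitzEquiv _ _ := by simpa using (cons_append_of_commute h').symm

end HurwitzEquiv

def hurwitzStabilizer (l : List G) : Subgroup G where
  carrier := {g | HurwitzEquiv (l.map (MulAut.conj g)) l}
  one_mem' := by simpa using HurwitzEquiv.refl l
  mul_mem' {g h} hg hh := by
    rw [Set.mem_ofPred_eq, map_mul, MulAut.coe_mul, ← List.map_map]
    exact (hh.map (MulAut.conj g)).trans hg
  inv_mem' {g} hg := by
    simpa [List.map_map, Function.comp_def, mul_assoc] using (hg.map (MulAut.conj g⁻¹)).symm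

theorem mem_hurwitzStabilizer {l : List G} {g : G} :
    g ∈ hurwitzStabilizer l ↔ HurwitzEquiv (l.map (MulAut.conj g)) l :=
  Iff.rfl

theorem HurwitzEquiv.hurwitzStabilizer_le {x y : List G} (h : HurwitzEquiv x y) :
    hurwitzStabilizer x ≤ hurwitzStabilizer y := fun g hg =>
  calc HurwitzEquiv (y.map (MulAut.conj g)) (x.map (MulAut.conj g)) := (h.map _).symm
    HurwitzEquiv _ x := hg
    HurwitzEquiv _ y := h

theorem HurwitzEquiv.hurwitzStabilizer_eq {x y : List G} (h : HurwitzEquiv x y) :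
    hurwitzStabilizer x = hurwitzStabilizer y :=
  le_antisymm h.hurwitzStabilizer_le h.symm.hurwitzStabilizer_le

theorem mem_hurwitzStabilizer_of_mem {l : List G} {g : G} (hg : g ∈ l)
    (hl : ∀ x ∈ l, Commute x l.prod) : g ∈ hurwitzStabilizer l := by
  obtain ⟨u, v, rfl⟩ := List.append_of_mem hg
  have hrot : HurwitzEquiv (u ++ g :: v) (g :: (v ++ u)) := by
    simpa using HurwitzEquiv.append_comm fun x hx => hl x (List.mem_append_left _ hx)
  have hg' : Commute g (v ++ u).prod := by
    rw [← commute_self_mul_iff, ← List.prod_cons, ← hrot.prod_eq]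
    exact hl g hg
  rw [hrot.hurwitzStabilizer_eq]
  exact (HurwitzEquiv.map_conj_head hg').symm

end

/-- **Partial conjugation (Lemma 4.4).** Let `(ρ_1, …, ρ_r)` be a tuple of elements of a
group `G`, decomposed as `l₁ ++ m ++ l₂` where `m = (ρ_p, …, ρ_q)` is a consecutive block.
Let `H` be the subgroup generated by the entries of the block `m`. If the product
`ρ_p ρ_{p+1} ⋯ ρ_q` is central in `H`, and `b ∈ H`, then the tuple obtained by conjugating
every entry of the block by `b` is Hurwitz equivalent to the original tuple. -/
theorem partial_conjugation_hurwitz {G : Type*} [Group G] (l₁ m l₂ : List G) (b : G)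
    (hb : b ∈ Subgroup.closure {x | x ∈ m})
    (hcentral : ∀ h ∈ Subgroup.closure {x | x ∈ m}, m.prod * h = h * m.prod) :
    HurwitzEquiv (l₁ ++ m.map (fun x => b⁻¹ * x * b) ++ l₂) (l₁ ++ m ++ l₂) := by
  have hle : Subgroup.closure {x | x ∈ m} ≤ hurwitzStabilizer m :=
    (Subgroup.closure_le _).mpr fun g hg =>
      mem_hurwitzStabilizer_of_mem hg fun x hx => (hcentral x (Subgroup.subset_closure hx)).symm
  have hconj := mem_hurwitzStabilizer.mp (hle (inv_mem hb))
  rw [map_inv, show ⇑(MulAut.conj b)⁻¹ = fun x => b⁻¹ * x * b from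
    funext (MulAut.conj_inv_apply b)] at hconj
  exact hconj.append l₁ l₂
end

section
/- Let θ : ℝ × ℝ → ℝ be a differentiable function such that the partial derivative of θ with respect to its second variable vanishes identically (fderiv ℝ θ x applied to (0,1) is 0 for all x). Define φ : ℝ⁴ → ℝ⁴ on coordinates (q₁, q₂, p₁, p₂) by φ(q₁, q₂, p₁, p₂) = (q₁ + θ(p₁, p₂), q₂, p₁, p₂). Then φ is differentiable, and for every x ∈ ℝ⁴ its total derivative Dφ_x preserves the standard symplectic bilinear form: Ω(Dφ_x u, Dφ_x v) = Ω(u, v) for all u, v ∈ ℝ⁴, where Ω(u, v) = u₃ v₁ − u₁ v₃ + u₄ v₂ − u₂ v₄. -/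
/-- **The Luttinger surgery gluing map is symplectic.** Let `θ : ℝ × ℝ → ℝ` be a
differentiable function with `∂θ/∂p₂ = 0` everywhere. On `ℝ⁴` with coordinates
`(q₁, q₂, p₁, p₂)`, define `φ(q₁, q₂, p₁, p₂) = (q₁ + θ(p₁, p₂), q₂, p₁, p₂)`. Then `φ` is
differentiable and its total derivative at every point preserves the standard symplectic
bilinear form `Ω(u, v) = u₃ v₁ − u₁ v₃ + u₄ v₂ − u₂ v₄` (i.e. `dp₁ ∧ dq₁ + dp₂ ∧ dq₂`). -/
theorem luttinger_gluing_symplectic (θ : ℝ × ℝ → ℝ) (hθ : Differentiable ℝ θ)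
    (hθ₂ : ∀ x : ℝ × ℝ, fderiv ℝ θ x (0, 1) = 0)
    (φ : (Fin 4 → ℝ) → (Fin 4 → ℝ))
    (hφ : φ = fun x => ![x 0 + θ (x 2, x 3), x 1, x 2, x 3])
    (Ω : (Fin 4 → ℝ) → (Fin 4 → ℝ) → ℝ)
    (hΩ : Ω = fun u v => u 2 * v 0 - u 0 * v 2 + u 3 * v 1 - u 1 * v 3) :
    Differentiable ℝ φ ∧
      ∀ (x u v : Fin 4 → ℝ), Ω (fderiv ℝ φ x u) (fderiv ℝ φ x v) = Ω u v := by
  subst hφ hΩ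
  set A : (Fin 4 → ℝ) →L[ℝ] ℝ × ℝ :=
    (ContinuousLinearMap.proj 2).prod (ContinuousLinearMap.proj 3) with hA
  have key : ∀ x : Fin 4 → ℝ,
      HasFDerivAt (fun x : Fin 4 → ℝ => ![x 0 + θ (x 2, x 3), x 1, x 2, x 3])
      (ContinuousLinearMap.pi
        ![(ContinuousLinearMap.proj 0) + (fderiv ℝ θ (x 2, x 3)).comp A,
          ContinuousLinearMap.proj 1, ContinuousLinearMap.proj 2,
          ContinuousLinearMap.proj 3]) x := by
    intro x
    apply hasFDerivAt_pi.2
    intro i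
    fin_cases i
    · exact (hasFDerivAt_apply 0 x).add
        (((hθ (x 2, x 3)).hasFDerivAt).comp x A.hasFDerivAt)
    · exact hasFDerivAt_apply 1 x
    · exact hasFDerivAt_apply 2 x
    · exact hasFDerivAt_apply 3 x
  constructor
  · exact fun x => (key x).differentiableAt
  · intro x u v
    rw [(key x).fderiv]
    have hlin : ∀ w : Fin 4 → ℝ,
        fderiv ℝ θ (x 2, x 3) (w 2, w 3) = w 2 * fderiv ℝ θ (x 2, x 3) (1, 0) := by
      intro w
      have : (w 2, w 3) = w 2 • ((1 : ℝ), (0 : ℝ)) + w 3 • ((0 : ℝ), (1 : ℝ)) := by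
        simp [Prod.ext_iff]
      rw [this, map_add, map_smul, map_smul, hθ₂]
      simp [mul_comm]
    simp [ContinuousLinearMap.pi_apply, hA, hlin]
    ring
end

section
/- Let d, κ, ν, N be integers, and work in ℚ. Set g = (d−1)(d−2)/2 − κ − ν, c₁² = g − 1 − (9/2)d + 9N, and c₂ = 2g − 2 + 3N − κ. If c₁² is an integer and (c₁² − 2c₂)/3 is an integer, then d is even and κ is divisible by 3. -/
/-- For the branch curve of an `N`-fold symplectic branched covering of `ℂP²`, of degree `d`
with `κ` cusps and `ν` nodes, setting `g = (d−1)(d−2)/2 − κ − ν`,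
`c₁² = g − 1 − (9/2)d + 9N` and `c₂ = 2g − 2 + 3N − κ`, the integrality of the
Euler–Poincaré characteristic `χ = c₂` and of the signature `σ = (c₁² − 2c₂)/3` forces the
degree `d` to be even and the number of cusps `κ` to be a multiple of `3`. -/
theorem degree_even_cusps_div_three (d κ ν N : ℤ) :
    let g : ℚ := ((d : ℚ) - 1) * ((d : ℚ) - 2) / 2 - (κ : ℚ) - (ν : ℚ)
    let c₁sq : ℚ := g - 1 - (9 / 2) * (d : ℚ) + 9 * (N : ℚ)
    let c₂ : ℚ := 2 * g - 2 + 3 * (N : ℚ) - (κ : ℚ)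
    (∃ a : ℤ, (a : ℚ) = c₁sq) → (∃ b : ℤ, (b : ℚ) = (c₁sq - 2 * c₂) / 3) →
    2 ∣ d ∧ 3 ∣ κ := by
  intro g c₁sq c₂ ha hb
  obtain ⟨a, ha⟩ := ha
  obtain ⟨b, hb⟩ := hb
  have h1 : (2 * a : ℚ) = d * d - 12 * d - 2 * κ - 2 * ν + 18 * N := by
    rw [ha]
    simp only [c₁sq, g]
    ring
  have h2 : (6 * b : ℚ) =
      -3 * ((d - 1) * (d - 2)) + 10 * κ + 6 * ν + 6 - 9 * d + 6 * N := by
    rw [hb]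
    simp only [c₁sq, c₂, g]
    ring
  have hA : 2 * a = d * d - 12 * d - 2 * κ - 2 * ν + 18 * N := by exact_mod_cast h1
  have hB : 6 * b = -3 * ((d - 1) * (d - 2)) + 10 * κ + 6 * ν + 6 - 9 * d + 6 * N := by
    exact_mod_cast h2
  constructor
  · have hdd : 2 ∣ d * d := by omega
    exact (Int.prime_two.dvd_mul.mp hdd).elim id id
  · omega
end

section
/- Let G be a group and let (ρ_1, …, ρ_r) be a tuple of elements of G whose entries generate G and whose product ρ_1 ρ_2 ⋯ ρ_r lies in the center of G. Then for every b ∈ G, the fully conjugated tuple (b^{−1} ρ_1 b, b^{−1} ρ_2 b, …, b^{−1} ρ_r b) is Hurwitz equivalent to (ρ_1, …, ρ_r). -/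
section Aux

variable {G : Type*} [Group G]

lemma he_refl (l : List G) : HurwitzEquiv l l := Relation.EqvGen.refl l

lemma he_symm {l m : List G} (h : HurwitzEquiv l m) : HurwitzEquiv m l :=
  Relation.EqvGen.symm _ _ h

lemma he_trans {l m n : List G} (h1 : HurwitzEquiv l m) (h2 : HurwitzEquiv m n) :
    HurwitzEquiv l n := Relation.EqvGen.trans _ _ _ h1 h2

lemma he_move (l₁ l₂ : List G) (a b : G) :
    HurwitzEquiv (l₁ ++ a :: b :: l₂) (l₁ ++ (a * b * a⁻¹) :: a :: l₂) :=
  Relation.EqvGen.rel _ _ (HurwitzMove.move l₁ l₂ a b)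

lemma he_move' (l₁ l₂ : List G) (a b : G) :
    HurwitzEquiv (l₁ ++ a :: b :: l₂) (l₁ ++ b :: (b⁻¹ * a * b) :: l₂) := by
  have h := he_move l₁ l₂ b (b⁻¹ * a * b)
  have h2 : b * (b⁻¹ * a * b) * b⁻¹ = a := by group
  rw [h2] at h
  exact he_symm h

/-- Hurwitz equivalence is preserved by mapping a monoid hom over the lists. -/
lemma he_map (φ : G →* G) {l m : List G} (h : HurwitzEquiv l m) :
    HurwitzEquiv (l.map φ) (m.map φ) := by
  induction h with
  | rel x y hxy =>
    cases hxy with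
    | move l₁ l₂ a b =>
      have h := he_move (l₁.map φ) (l₂.map φ) (φ a) (φ b)
      simpa [List.map_append, map_mul, map_inv] using h
  | refl _ => exact he_refl _
  | symm _ _ _ ih => exact he_symm ih
  | trans _ _ _ _ _ ih1 ih2 => exact he_trans ih1 ih2

/-- Hurwitz equivalence is a congruence for appending on both sides. -/
lemma he_congr (P Q : List G) {l m : List G} (h : HurwitzEquiv l m) :
    HurwitzEquiv (P ++ l ++ Q) (P ++ m ++ Q) := by
  induction h with
  | rel x y hxy =>
    cases hxy with
    | move l₁ l₂ a b =>
      have h := he_move (P ++ l₁) (l₂ ++ Q) a b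
      simpa [List.append_assoc] using h
  | refl _ => exact he_refl _
  | symm _ _ _ ih => exact he_symm ih
  | trans _ _ _ _ _ ih1 ih2 => exact he_trans ih1 ih2

/-- Push `a` rightwards past `M`, conjugating the entries of `M` by `a`. -/
lemma he_push_right (a : G) : ∀ (M P Q : List G),
    HurwitzEquiv (P ++ a :: (M ++ Q)) (P ++ (M.map fun x => a * x * a⁻¹) ++ a :: Q)
  | [], P, Q => by simpa using he_refl (P ++ a :: Q)
  | x :: T, P, Q => by
    have h1 := he_move P (T ++ Q) a x
    have h2 := he_push_right a T (P ++ [a * x * a⁻¹]) Q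
    refine he_trans (by simpa using h1) ?_
    simpa [List.append_assoc] using h2

/-- Pull `a` leftwards past `M`, conjugating the entries of `M` by `a⁻¹`. -/
lemma he_pull_left (a : G) : ∀ (M P Q : List G),
    HurwitzEquiv (P ++ M ++ a :: Q) (P ++ a :: (M.map fun x => a⁻¹ * x * a) ++ Q)
  | [], P, Q => by simpa using he_refl (P ++ a :: Q)
  | x :: T, P, Q => by
    have h1 := he_pull_left a T (P ++ [x]) Q
    have h2 := he_move' P ((T.map fun x => a⁻¹ * x * a) ++ Q) x a
    refine he_trans (by simpa [List.append_assoc] using h1) ?_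
    simpa [List.append_assoc] using h2

/-- Rotate the head element to the end, at the cost of conjugating it by the product of
the rest. -/
lemma he_rotate (a : G) : ∀ (M : List G),
    HurwitzEquiv (a :: M) (M ++ [M.prod⁻¹ * a * M.prod])
  | [] => by simpa using he_refl [a]
  | x :: T => by
    have h1 := he_move' ([] : List G) T a x
    have h2 := he_congr [x] [] (he_rotate (x⁻¹ * a * x) T)
    have h3 : T.prod⁻¹ * (x⁻¹ * a * x) * T.prod
        = (x :: T).prod⁻¹ * a * (x :: T).prod := by
      simp [List.prod_cons, mul_assoc]
    refine he_trans (by simpa using h1) ?_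
    rw [h3] at h2
    simpa [List.append_assoc] using h2

lemma prod_map_conj (g : G) (l : List G) :
    (l.map fun x => g⁻¹ * x * g).prod = g⁻¹ * l.prod * g := by
  induction l with
  | nil => simp
  | cons x T ih => simp only [List.map_cons, List.prod_cons, ih]; group

/-- The crux: conjugating the whole tuple by a member of the tuple is Hurwitz-realizable,
provided the total product is central. -/
lemma he_conj_mem (L : List G) (hc : L.prod ∈ Subgroup.center G) {a : G} (ha : a ∈ L) :
    HurwitzEquiv (L.map fun x => a⁻¹ * x * a) L := by
  obtain ⟨l₁, l₂, rfl⟩ := List.append_of_mem ha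
  set d : G → G := fun x => a⁻¹ * x * a with hd
  set M : List G := l₁.map d ++ l₂ with hM
  -- Step 1 : map d L ~ M ++ [a]
  have step1 : HurwitzEquiv ((l₁ ++ a :: l₂).map d) (M ++ [a]) := by
    have h := he_push_right a (l₂.map d) (l₁.map d) []
    have hmm : ((l₂.map d).map fun x => a * x * a⁻¹) = l₂ := by
      rw [List.map_map]
      have : ((fun x => a * x * a⁻¹) ∘ d) = id := by
        funext x; simp [hd]; group
      simp [this]
    rw [hmm] at h
    have hda : d a = a := by simp [hd]
    simpa [List.map_append, hd, List.append_assoc, hM] using h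
  -- Step 2 : a :: M ~ M ++ [a]  (uses centrality)
  have step2 : HurwitzEquiv (a :: M) (M ++ [a]) := by
    have h := he_rotate a M
    have hz : a * M.prod = (l₁ ++ a :: l₂).prod := by
      rw [hM, List.prod_append, hd, prod_map_conj]
      simp [List.prod_append, List.prod_cons, mul_assoc]
    have hzz := Subgroup.mem_center_iff.mp hc
    have hMp : M.prod = a⁻¹ * (l₁ ++ a :: l₂).prod := by rw [← hz]; group
    have hfix : M.prod⁻¹ * a * M.prod = a := by
      rw [hMp]
      set z := (l₁ ++ a :: l₂).prod with hzdef
      calc (a⁻¹ * z)⁻¹ * a * (a⁻¹ * z) = z⁻¹ * (a * z) := by group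
        _ = z⁻¹ * (z * a) := by rw [hzz a]
        _ = a := by group
    rwa [hfix] at h
  -- Step 3 : L ~ a :: M
  have step3 : HurwitzEquiv (l₁ ++ a :: l₂) (a :: M) := by
    have h := he_pull_left a l₁ [] l₂
    simpa [hM, hd] using h
  exact he_trans step1 (he_trans (he_symm step2) (he_symm step3))

end Aux

/-- For a group `G`, a tuple of elements of `G` whose entries generate `G` and whose product
is central is Hurwitz equivalent to any of its global conjugates: for every `b ∈ G`, the
tuple `(b⁻¹ ρ_1 b, …, b⁻¹ ρ_r b)` is Hurwitz equivalent to `(ρ_1, …, ρ_r)`. -/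
theorem global_conjugation_hurwitz {G : Type*} [Group G] (L : List G)
    (hgen : Subgroup.closure {x | x ∈ L} = ⊤)
    (hcentral : L.prod ∈ Subgroup.center G) (b : G) :
    HurwitzEquiv (L.map (fun x => b⁻¹ * x * b)) L := by
  let S : Subgroup G :=
    { carrier := {g | HurwitzEquiv (L.map fun x => g⁻¹ * x * g) L}
      one_mem' := by simpa using he_refl L
      mul_mem' := by
        intro x y hx hy
        have hφ : (fun t => (x * y)⁻¹ * t * (x * y))
            = (fun t => y⁻¹ * t * y) ∘ (fun t => x⁻¹ * t * x) := by
          funext t; simp [mul_assoc]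
        have hcy : ∃ φ : G →* G, ⇑φ = fun t => y⁻¹ * t * y :=
          ⟨(MulAut.conj y⁻¹).toMonoidHom, by funext t; simp [MulAut.conj]⟩
        obtain ⟨φ, hφy⟩ := hcy
        have h1 : HurwitzEquiv ((L.map fun t => x⁻¹ * t * x).map φ) (L.map φ) :=
          he_map φ hx
        rw [hφy] at h1
        show HurwitzEquiv (L.map fun t => (x * y)⁻¹ * t * (x * y)) L
        rw [hφ, ← List.map_map]
        exact he_trans h1 hy
      inv_mem' := by
        intro x hx
        have hcx : ∃ φ : G →* G, ⇑φ = fun t => x * t * x⁻¹ :=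
          ⟨(MulAut.conj x).toMonoidHom, by funext t; simp [MulAut.conj]⟩
        obtain ⟨φ, hφx⟩ := hcx
        have h1 : HurwitzEquiv ((L.map fun t => x⁻¹ * t * x).map φ) (L.map φ) :=
          he_map φ hx
        rw [hφx] at h1
        rw [List.map_map] at h1
        have hid : ((fun t => x * t * x⁻¹) ∘ fun t => x⁻¹ * t * x) = id := by
          funext t; simp; group
        rw [hid, List.map_id] at h1
        have : HurwitzEquiv (L.map fun t => (x⁻¹)⁻¹ * t * x⁻¹) L := by
          simpa using he_symm h1
        exact this
    }
  have hle : Subgroup.closure {x | x ∈ L} ≤ S :=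
    Subgroup.closure_le S |>.2 fun a ha => he_conj_mem L hcentral ha
  have : b ∈ S := by
    have : b ∈ (⊤ : Subgroup G) := trivial
    rw [← hgen] at this
    exact hle this
  exact this
end
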